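/- Let G be a primitive permutation group on a finite set X containing an abelian semiregular subgroup H, and let Γ be a G-invariant digraph with symbol 𝕊 relative to H. If λ is an eigenvalue of Γ with λ ≠ val(Γ) (the valency of Γ), then the set K_{𝕊,λ} = {χ ∈ H* : det(χ(𝕊) − λI) = 0} generates the full dual group H*. -/

import Mathlib

/-!
Suppose the characters in `K_{𝕊,λ}` generate a proper subgroup of `H*`. By duality for finite
abelian groups, some `n ≠ 1` in `H` lies in the kernel of all of them. The `λ`-eigenspace `V` of
the adjacency matrix is `G`-invariant, so "no vector of `V` tells `a` from `b`" is a
`G`-congruence; by primitivity it is trivial, since otherwise `V` consists of constant vectors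
and `λ = val(Γ)`. Each `w ∈ V` is a sum of components `F_χ ∈ V` with `F_χ (k • z) = χ k * F_χ z`,
and on the base points a nonzero `F_χ` is a kernel vector of `χ(𝕊) − λI`, so `χ n = 1`. Hence
every `w ∈ V` is `n`-invariant, `n` fixes a point, and semiregularity forces `n = 1`.
-/

open MulAction Pointwise
open scoped Classical Matrix

namespace CommGroup

variable {G M : Type*} [CommGroup G] [Finite G]

theorem exists_ne_one_forall_apply_eq_one_of_ne_top [CommMonoid M]
    [HasEnoughRootsOfUnity M (Monoid.exponent G)] {Φ : Subgroup (G →* Mˣ)} (hΦ : Φ ≠ ⊤) :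
    ∃ g : G, g ≠ 1 ∧ ∀ φ ∈ Φ, φ g = 1 := by
  have hbot : (subgroupOrderIsoSubgroupMonoidHom G M).symm (OrderDual.toDual Φ) ≠ ⊥ := by
    rw [ne_eq, OrderIso.symm_apply_eq, OrderIso.map_bot]
    exact hΦ
  obtain ⟨⟨g, hg⟩, hg1⟩ := Subgroup.ne_bot_iff_exists_ne_one.mp hbot
  exact ⟨g, fun h => hg1 (Subtype.ext h),
    (mem_subgroupOrderIsoSubgroupMonoidHom_symm_iff M Φ g).mp hg⟩

theorem sum_monoidHom_apply_eq_zero [CommRing M] [IsDomain M]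
    [HasEnoughRootsOfUnity M (Monoid.exponent G)] [Fintype (G →* Mˣ)] {g : G} (hg : g ≠ 1) :
    ∑ φ : G →* Mˣ, (φ g : M) = 0 := by
  obtain ⟨ψ, hψ⟩ := exists_apply_ne_one_of_hasEnoughRootsOfUnity G M hg
  have hfix : (ψ g : M) * ∑ φ : G →* Mˣ, (φ g : M) = ∑ φ : G →* Mˣ, (φ g : M) := by
    rw [Finset.mul_sum]
    exact Fintype.sum_equiv (Equiv.mulLeft ψ) _ _ fun φ => by simp
  have hψ' : (ψ g : M) ≠ 1 := by
    rwa [ne_eq, Units.val_eq_one]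
  exact (mul_eq_zero.mp (by linear_combination hfix : ((ψ g : M) - 1) * _ = 0)).resolve_left
    (sub_ne_zero.mpr hψ')

end CommGroup

section CharComponent

variable {H X : Type*} [CommGroup H] [Fintype H] [MulAction H X]

noncomputable def charComponent (χ : H →* ℂˣ) (w : X → ℂ) (z : X) : ℂ :=
  ∑ h : H, (χ h : ℂ) * w (h⁻¹ • z)

theorem charComponent_smul (χ : H →* ℂˣ) (w : X → ℂ) (k : H) (z : X) :
    charComponent χ w (k • z) = χ k * charComponent χ w z := by
  rw [charComponent, charComponent, Finset.mul_sum,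
    ← Equiv.sum_comp (Equiv.mulLeft k) fun h => (χ h : ℂ) * w (h⁻¹ • k • z)]
  refine Finset.sum_congr rfl fun h _ => ?_
  simp only [Equiv.coe_mulLeft, map_mul, Units.val_mul, mul_inv_rev, mul_smul,
    inv_smul_smul, mul_assoc]

theorem sum_charComponent [Fintype (H →* ℂˣ)] (w : X → ℂ) (z : X) :
    ∑ χ : H →* ℂˣ, charComponent χ w z = Fintype.card (H →* ℂˣ) * w z := by
  simp only [charComponent]
  rw [Finset.sum_comm, Finset.sum_eq_single_of_mem (1 : H) (Finset.mem_univ _)]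
  · simp
  · intro h _ hh
    rw [← Finset.sum_mul, CommGroup.sum_monoidHom_apply_eq_zero hh, zero_mul]

theorem charComponent_mem {V : Submodule ℂ (X → ℂ)}
    (hV : ∀ h : H, ∀ w ∈ V, (fun z => w (h • z)) ∈ V) (χ : H →* ℂˣ) {w : X → ℂ} (hw : w ∈ V) :
    charComponent χ w ∈ V := by
  have hsum : charComponent χ w = ∑ h : H, (χ h : ℂ) • fun z => w (h⁻¹ • z) := by
    ext z
    simp [charComponent]
  rw [hsum]
  exact V.sum_mem fun h _ => V.smul_mem _ (hV h⁻¹ w hw)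

theorem apply_smul_eq_of_charComponent_ne_zero {w : X → ℂ} {n : H}
    (hn : ∀ χ : H →* ℂˣ, charComponent χ w ≠ 0 → χ n = 1) (z : X) : w (n • z) = w z := by
  have : Fintype (H →* ℂˣ) := Fintype.ofFinite _
  have hcard : (Fintype.card (H →* ℂˣ) : ℂ) ≠ 0 := Nat.cast_ne_zero.mpr Fintype.card_ne_zero
  refine mul_left_cancel₀ hcard ?_
  rw [← sum_charComponent, ← sum_charComponent]
  refine Finset.sum_congr rfl fun χ _ => ?_
  by_cases hχ : charComponent χ w = 0
  · rw [hχ, Pi.zero_apply, Pi.zero_apply]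
  · rw [charComponent_smul, hn χ hχ, Units.val_one, one_mul]

end CharComponent

section Symbol

variable {H X ι R : Type*} [Group H] [MulAction H X]

theorem bijective_smul_of_orbits (hfree : ∀ (h : H) (a : X), h • a = a → h = 1) {x : ι → X}
    (horb : ∀ y : X, ∃ i, y ∈ orbit H (x i))
    (hdisj : ∀ i j, i ≠ j → orbit H (x i) ≠ orbit H (x j)) :
    Function.Bijective fun p : ι × H => p.2 • x p.1 := by
  refine ⟨?_, fun y => ?_⟩
  · rintro ⟨i, h⟩ ⟨j, k⟩ (heq : h • x i = k • x j)
    obtain rfl : i = j := by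
      by_contra hij
      refine hdisj i j hij (orbit_eq_iff.mpr ⟨h⁻¹ * k, ?_⟩)
      change (h⁻¹ * k) • x j = x i
      rw [mul_smul, ← heq, inv_smul_smul]
    obtain rfl : k = h := by
      rw [← inv_mul_eq_one]
      exact hfree _ (x i) (by rw [mul_smul, heq, inv_smul_smul])
    rfl
  · obtain ⟨i, h, hh⟩ := horb y
    exact ⟨(i, h), hh⟩

variable [Fintype H] [CommRing R]

def symbolMatrix (A : Matrix X X R) (x : ι → X) (χ : H →* Rˣ) : Matrix ι ι R :=
  Matrix.of fun i j => ∑ h : H, A (x i) (h • x j) * χ h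

theorem symbolMatrix_eq_of_adjacency {r : X → X → Prop} {A : Matrix X X R}
    (hA : ∀ a b, A a b = if r a b then 1 else 0) {x : ι → X} {S : ι → ι → Set H}
    (hS : ∀ i j, S i j = {h : H | r (x i) (h • x j)}) (χ : H →* Rˣ) :
    symbolMatrix A x χ = Matrix.of fun i j => ∑ h : H, if h ∈ S i j then (χ h : R) else 0 := by
  ext i j
  simp only [symbolMatrix, Matrix.of_apply, hA, hS, ite_mul, one_mul, zero_mul,
    Set.mem_ofPred_eq]

variable [Fintype X] [Fintype ι]

theorem symbolMatrix_mulVec_comp {A : Matrix X X R} {x : ι → X}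
    (hx : Function.Bijective fun p : ι × H => p.2 • x p.1) {χ : H →* Rˣ} {μ : R} {u : X → R}
    (hu : A *ᵥ u = μ • u) (hχ : ∀ (k : H) (z : X), u (k • z) = χ k * u z) :
    symbolMatrix A x χ *ᵥ (u ∘ x) = μ • (u ∘ x) := by
  ext i
  calc (symbolMatrix A x χ *ᵥ (u ∘ x)) i
      = ∑ p : ι × H, A (x i) (p.2 • x p.1) * u (p.2 • x p.1) := by
        simp only [symbolMatrix, Matrix.mulVec, dotProduct, Matrix.of_apply, Function.comp_apply,
          Finset.sum_mul, Fintype.sum_prod_type, hχ, mul_assoc]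
    _ = (A *ᵥ u) (x i) := (Equiv.sum_comp (Equiv.ofBijective _ hx) fun b => A (x i) b * u b)
    _ = (μ • (u ∘ x)) i := by rw [hu]; rfl

theorem det_symbolMatrix_sub_smul_eq_zero [IsDomain R] [DecidableEq ι] {A : Matrix X X R}
    {x : ι → X} (hx : Function.Bijective fun p : ι × H => p.2 • x p.1) {χ : H →* Rˣ} {μ : R}
    {u : X → R} (hu : A *ᵥ u = μ • u) (hχ : ∀ (k : H) (z : X), u (k • z) = χ k * u z)
    (hu0 : u ≠ 0) :
    (symbolMatrix A x χ - μ • 1).det = 0 := by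
  refine Matrix.exists_mulVec_eq_zero_iff.mp ⟨u ∘ x, fun hux => hu0 ?_, ?_⟩
  · ext z
    obtain ⟨⟨i, h⟩, rfl⟩ := hx.2 z
    simp only [hχ, Pi.zero_apply]
    rw [show u (x i) = 0 from congrFun hux i, mul_zero]
  · rw [Matrix.sub_mulVec, Matrix.smul_mulVec, Matrix.one_mulVec,
      symbolMatrix_mulVec_comp hx hu hχ, sub_self]

end Symbol

section Primitive

variable {G X : Type*} [Group G] [MulAction G X]

theorem setoid_trivial_of_primitive
    (hprim : ∀ B : Set (Set X), Setoid.IsPartition B →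
      (∀ (g : G), ∀ b ∈ B, g • b ∈ B) →
      (∀ b ∈ B, ∃ z : X, b = {z}) ∨ B = {Set.univ})
    (s : Setoid X) (hs : ∀ (g : G) (a b : X), s a b → s (g • a) (g • b)) :
    (∀ a b, s a b → a = b) ∨ ∀ a b, s a b := by
  have hclasses : ∀ (g : G), ∀ c ∈ s.classes, g • c ∈ s.classes := by
    rintro g c ⟨y, rfl⟩
    refine ⟨g • y, Set.ext fun z => ?_⟩
    rw [Set.mem_smul_set_iff_inv_smul_mem]
    exact ⟨fun hz => by simpa using hs g _ _ hz, fun hz => by simpa using hs g⁻¹ _ _ hz⟩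
  refine (hprim _ s.isPartition_classes hclasses).imp (fun hsing a b hab => ?_) fun huniv a b => ?_
  · obtain ⟨z, hz⟩ := hsing _ ⟨b, rfl⟩
    have ha : a ∈ {y | s y b} := hab
    have hb : b ∈ {y | s y b} := s.refl b
    rw [hz, Set.mem_singleton_iff] at ha hb
    exact ha.trans hb.symm
  · have hb : {y | s y b} = Set.univ := Set.mem_singleton_iff.mp (huniv ▸ ⟨b, rfl⟩)
    exact (hb.symm ▸ Set.mem_univ a : a ∈ {y | s y b})

theorem separates_points_or_const_of_primitive {Y : Type*}
    (hprim : ∀ B : Set (Set X), Setoid.IsPartition B →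
      (∀ (g : G), ∀ b ∈ B, g • b ∈ B) →
      (∀ b ∈ B, ∃ z : X, b = {z}) ∨ B = {Set.univ})
    {F : Set (X → Y)} (hF : ∀ (g : G), ∀ w ∈ F, (fun z => w (g • z)) ∈ F) :
    (∀ a b, (∀ w ∈ F, w a = w b) → a = b) ∨ ∀ w ∈ F, ∀ a b, w a = w b := by
  let s : Setoid X := Setoid.ker fun a (w : F) => (w : X → Y) a
  have hs : ∀ a b, s a b ↔ ∀ w ∈ F, w a = w b := fun a b => by
    simp [s, Setoid.ker_def, funext_iff]
  refine (setoid_trivial_of_primitive hprim s fun g a b hab => ?_).imp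
    (fun h a b hab => h a b ((hs a b).mpr hab)) fun h w hw a b => (hs a b).mp (h a b) w hw
  exact (hs _ _).mpr fun w hw => (hs a b).mp hab _ (hF g w hw)

end Primitive

section Eigen

variable {X R : Type*} [Fintype X] [CommRing R]

theorem comp_mem_eigenspace_of_submatrix_eq {A : Matrix X X R} {σ : X ≃ X}
    (hA : A.submatrix σ σ = A) {μ : R} {w : X → R}
    (hw : w ∈ Module.End.eigenspace (Matrix.toLin' A) μ) :
    w ∘ σ ∈ Module.End.eigenspace (Matrix.toLin' A) μ := by
  rw [Module.End.mem_eigenspace_iff, Matrix.toLin'_apply] at hw ⊢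
  conv_lhs => rw [← hA, Matrix.submatrix_mulVec_equiv]
  rw [Function.comp_assoc, σ.self_comp_symm, Function.comp_id, hw]
  rfl

theorem eq_of_mulVec_const_eq_smul [IsDomain R] {A : Matrix X X R} {d μ : R}
    (hrow : ∀ a, ∑ b, A a b = d) {w : X → R} (hw0 : w ≠ 0) (hw : A *ᵥ w = μ • w)
    (hconst : ∀ a b, w a = w b) : μ = d := by
  obtain ⟨a, ha⟩ := Function.ne_iff.mp hw0
  refine mul_right_cancel₀ ha ?_
  calc μ * w a = (A *ᵥ w) a := by rw [hw]; rfl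
    _ = d * w a := by simp only [Matrix.mulVec, dotProduct, hconst _ a, ← Finset.sum_mul, hrow]

end Eigen

theorem stmt15_general {G X : Type*} [Group G] [Fintype X] [MulAction G X]
    (hprim : ∀ B : Set (Set X), Setoid.IsPartition B →
      (∀ (g : G), ∀ b ∈ B, g • b ∈ B) →
      (∀ b ∈ B, ∃ z : X, b = {z}) ∨ B = {Set.univ})
    (H : Subgroup G) [Fintype H]
    (habel : ∀ a b : H, a * b = b * a)
    (hsemi : ∀ (h : H) (x : X), (h : G) • x = x → h = 1)
    {m : ℕ} (x : Fin m → X)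
    (horb : ∀ y : X, ∃ i, y ∈ orbit H (x i))
    (hdisj : ∀ i j, i ≠ j → orbit H (x i) ≠ orbit H (x j))
    (R : X → X → Prop)
    (hinv : ∀ (g : G) (a b : X), R (g • a) (g • b) ↔ R a b)
    (A : Matrix X X ℂ) (hA : ∀ a b, A a b = if R a b then 1 else 0)
    (S : Fin m → Fin m → Set H)
    (hS : ∀ i j, S i j = {h : H | R (x i) ((h : G) • x j)})
    (d : ℕ) (hval : ∀ a : X, (Finset.univ.filter fun b => R a b).card = d)
    (lam : ℂ) (hlam : ∃ w : X → ℂ, w ≠ 0 ∧ A.mulVec w = lam • w)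
    (hne : lam ≠ (d : ℂ))
    (Kchar : Set (H →* ℂˣ))
    (hK : Kchar = {χ : H →* ℂˣ | Matrix.det
        ((Matrix.of fun i j : Fin m => ∑ h : H, if h ∈ S i j then ((χ h : ℂˣ) : ℂ) else 0)
          - lam • (1 : Matrix (Fin m) (Fin m) ℂ)) = 0}) :
    Subgroup.closure Kchar = ⊤ := by
  let : CommGroup H := { mul_comm := habel }
  by_contra hKtop
  obtain ⟨n, hn1, hnK⟩ := CommGroup.exists_ne_one_forall_apply_eq_one_of_ne_top hKtop
  set V := Module.End.eigenspace (Matrix.toLin' A) lam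
  have hV : ∀ (g : G), ∀ w ∈ V, (fun z => w (g • z)) ∈ V := fun g w hw =>
    comp_mem_eigenspace_of_submatrix_eq (σ := MulAction.toPerm g)
      (Matrix.ext fun a b => by simp [hA, hinv]) hw
  obtain ⟨w₀, hw₀, hw₀V⟩ := hlam
  have hw₀V' : w₀ ∈ V := by rwa [Module.End.mem_eigenspace_iff, Matrix.toLin'_apply]
  have hsep : ∀ a b, (∀ w ∈ V, w a = w b) → a = b := by
    refine (separates_points_or_const_of_primitive hprim hV).resolve_right fun hconst => hne ?_
    refine eq_of_mulVec_const_eq_smul (fun a => ?_) hw₀ hw₀V (hconst w₀ hw₀V')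
    simp [hA, Finset.sum_boole, hval]
  have hx := bijective_smul_of_orbits hsemi horb hdisj
  have hKchar : ∀ χ : H →* ℂˣ, ∀ u ∈ V, u ≠ 0 → (∀ (k : H) (z : X), u (k • z) = χ k * u z) →
      χ ∈ Kchar := fun χ u hu hu0 hχ => by
    rw [Module.End.mem_eigenspace_iff, Matrix.toLin'_apply] at hu
    rw [hK, Set.mem_ofPred_eq, ← symbolMatrix_eq_of_adjacency hA hS]
    exact det_symbolMatrix_sub_smul_eq_zero hx hu hχ hu0
  obtain ⟨a, -⟩ := Function.ne_iff.mp hw₀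
  refine hn1 (hsemi n a (hsep _ _ fun w hw => ?_))
  refine apply_smul_eq_of_charComponent_ne_zero (fun χ hχ => hnK χ (Subgroup.subset_closure ?_)) a
  exact hKchar χ _ (charComponent_mem (fun h : H => hV h) χ hw) hχ (charComponent_smul χ w)

/-- If `G` is primitive with abelian semiregular subgroup `H`, and `λ ≠ val(Γ)` is an
eigenvalue of a `G`-invariant digraph `Γ` with symbol `𝕊`, then
`K_{𝕊,λ} = {χ : det(χ(𝕊) − λI) = 0}` generates the full dual group `H*`. -/
theorem stmt15 {G X : Type*} [Group G] [Fintype X] [MulAction G X]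
    (htrans : ∀ x y : X, ∃ g : G, g • x = y)
    (hprim : ∀ B : Set (Set X), Setoid.IsPartition B →
      (∀ (g : G), ∀ b ∈ B, g • b ∈ B) →
      (∀ b ∈ B, ∃ z : X, b = {z}) ∨ B = {Set.univ})
    (H : Subgroup G) [Fintype H]
    (habel : ∀ a b : H, a * b = b * a)
    (hsemi : ∀ (h : H) (x : X), (h : G) • x = x → h = 1)
    {m : ℕ} (x : Fin m → X)
    (horb : ∀ y : X, ∃ i, y ∈ orbit H (x i))
    (hdisj : ∀ i j, i ≠ j → orbit H (x i) ≠ orbit H (x j))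
    (R : X → X → Prop)
    (hinv : ∀ (g : G) (a b : X), R (g • a) (g • b) ↔ R a b)
    (A : Matrix X X ℂ) (hA : ∀ a b, A a b = if R a b then 1 else 0)
    (S : Fin m → Fin m → Set H)
    (hS : ∀ i j, S i j = {h : H | R (x i) ((h : G) • x j)})
    (d : ℕ) (hval : ∀ a : X, (Finset.univ.filter fun b => R a b).card = d)
    (lam : ℂ) (hlam : ∃ w : X → ℂ, w ≠ 0 ∧ A.mulVec w = lam • w)
    (hne : lam ≠ (d : ℂ))
    (Kchar : Set (H →* ℂˣ))
    (hK : Kchar = {χ : H →* ℂˣ | Matrix.det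
        ((Matrix.of fun i j : Fin m => ∑ h : H, if h ∈ S i j then ((χ h : ℂˣ) : ℂ) else 0)
          - lam • (1 : Matrix (Fin m) (Fin m) ℂ)) = 0}) :
    Subgroup.closure Kchar = ⊤ :=
  stmt15_general hprim H habel hsemi x horb hdisj R hinv A hA S hS d hval lam hlam hne Kchar hK
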